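/- Fix n ≥ 3 and parameters β₄,…,β_n, δ, γ in ℂ. Every even derivation d of the Leibniz superalgebra H(β₄,…,β_n,δ,γ) has the form: d(e₁) = 2a₁e₁ + a₂e₃ + ⋯ + a_{n-1}e_n, d(e₂) = b₂e₂, d(e_i) = 2(i-1)a₁e_i + a₂e_{i+1} + ⋯ + a_{n-i+1}e_n (3 ≤ i ≤ n), d(y_i) = (2i-1)a₁y_i + a₂y_{i+1} + ⋯ + a_{n-i+1}y_n (1 ≤ i ≤ n), for some scalars a₁,…,a_{n-1}, b₂ satisfying β_i(2(i-2)a₁ - b₂) = 0 for 4 ≤ i ≤ n, δ(2(n-1)a₁ - b₂) = 0, and γ((n-1)a₁ - b₂) = 0. -/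

import Mathlib

/-!
Since `d` is even, `d y₁ = ∑ cₖ yₖ` and `d e₂ = ∑ bₖ eₖ`. Everything else is reached from `y₁` by
products: `e₁ = [y₁, y₁]`, `y_{i+1} = [yᵢ, e₁]`, `e₃ = [e₁, e₁]`, `e_{i+1} = [eᵢ, e₁]`. Right
multiplication by `e₁` shifts indices, and `[x, d e₁] = 2c₁ [x, e₁]` since each such `x`
annihilates `e₃, …, eₙ`; so along each chain the Leibniz rule adds `2c₁` to the diagonal
coefficient and shifts the off-diagonal part. Applying `d` to `[e₂, y₁] = 0` forces `bₖ = 0` for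
`k ≠ 2`. Finally `d` is applied to `[e₁, e₂]`, `[y₁, e₂]` and `[e₂, e₂]`: the off-diagonal parts
contribute the same double sum to both sides, and comparing the coefficients of `eᵢ`, `yₙ` and
`eₙ` leaves the three conditions.
-/

open Finset

theorem Finset.sum_Icc_eq_sum_Icc_of_eq_zero {M : Type*} [AddCommMonoid M] {f : ℕ → M}
    {a b c : ℕ} (hbc : b ≤ c) (hf : ∀ k, b < k → k ≤ c → f k = 0) :
    ∑ k ∈ Icc a b, f k = ∑ k ∈ Icc a c, f k :=
  sum_subset (Icc_subset_Icc_right hbc) fun k hk hk' => by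
    simp only [mem_Icc, not_and, not_le] at hk hk'
    exact hf k (hk' hk.1) hk.2

section Coordinates

variable {ι R V : Type*} [Semiring R] [AddCommMonoid V] [Module R V] {n : ℕ} {v : ℕ → V}

theorem exists_eq_sum_Icc_of_mem_span {w : Fin n → V} (hv : ∀ j : Fin n, v (j + 1) = w j) {x : V}
    (hx : x ∈ Submodule.span R (Set.range w)) : ∃ c : ℕ → R, x = ∑ k ∈ Icc 1 n, c k • v k := by
  obtain ⟨c, rfl⟩ := (Submodule.mem_span_range_iff_exists_fun R).mp hx
  refine ⟨fun k => if h : 1 ≤ k ∧ k ≤ n then c ⟨k - 1, by omega⟩ else 0, ?_⟩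
  refine sum_bij (fun j _ => j.val + 1) (fun j _ => by simp) (fun i _ j _ h => by
    simpa [Fin.ext_iff] using h) (fun k hk => ?_) (fun j _ => ?_)
  · simp only [mem_Icc] at hk
    exact ⟨⟨k - 1, by omega⟩, mem_univ _, by simp; omega⟩
  · simp only [dif_pos (show 1 ≤ j.val + 1 ∧ j.val + 1 ≤ n from ⟨by omega, j.isLt⟩), hv,
      Nat.add_sub_cancel]

/-- Indices count from `1`, as in the paper; the value for `m ∉ [1, n]` is the junk `0`. -/
noncomputable def coordAt (bas : Module.Basis ι R V) (emb : Fin n → ι) (m : ℕ) : V →ₗ[R] R :=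
  if h : 1 ≤ m ∧ m - 1 < n then bas.coord (emb ⟨m - 1, h.2⟩) else 0

theorem coordAt_apply {bas : Module.Basis ι R V} {emb : Fin n → ι}
    (hemb : Function.Injective emb)
    (hv : ∀ j : Fin n, v (j + 1) = bas (emb j)) (hv0 : ∀ k, ¬(1 ≤ k ∧ k ≤ n) → v k = 0)
    {m : ℕ} (hm : 1 ≤ m ∧ m ≤ n) (k : ℕ) :
    coordAt bas emb m (v k) = if k = m then 1 else 0 := by
  by_cases hk : 1 ≤ k ∧ k ≤ n
  · classical
    obtain ⟨j, rfl⟩ : ∃ j : Fin n, k = j + 1 := ⟨⟨k - 1, by omega⟩, by simp; omega⟩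
    rw [coordAt, dif_pos (by omega), hv, Module.Basis.coord_apply, bas.repr_self]
    simp only [Finsupp.single_apply, hemb.eq_iff, Fin.ext_iff]
    exact if_congr (by omega) rfl rfl
  · rw [hv0 k hk, map_zero, if_neg (by omega)]

theorem map_sum_smul_eq_ite {φ : V →ₗ[R] R} {m : ℕ}
    (hφ : ∀ k, φ (v k) = if k = m then 1 else 0) (s : Finset ℕ) (f : ℕ → R) :
    φ (∑ k ∈ s, f k • v k) = if m ∈ s then f m else 0 := by
  simp [map_sum, hφ]

end Coordinates

section TailSum

variable {R V : Type*} [Semiring R] [AddCommMonoid V] [Module R V] {n i : ℕ} {a : ℕ → R}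
  {v : ℕ → V}

/-- `a₂ v_{i+1} + ⋯ + a_{n-i+1} v_n`, the off-diagonal part of `d (v i)`. -/
def tailSum (a : ℕ → R) (v : ℕ → V) (n i : ℕ) : V :=
  ∑ k ∈ Icc 2 (n - i + 1), a k • v (i + k - 1)

theorem tailSum_eq_sum_Icc (hv0 : ∀ k, n < k → v k = 0) {N : ℕ} (hN : n - i + 1 ≤ N) :
    tailSum a v n i = ∑ k ∈ Icc 2 N, a k • v (i + k - 1) :=
  sum_Icc_eq_sum_Icc_of_eq_zero hN fun k hk _ => by rw [hv0 _ (by omega), smul_zero]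

theorem tailSum_two : tailSum a v n 2 = ∑ k ∈ Icc 2 (n - 1), a k • v (k + 1) := by
  unfold tailSum
  rcases Nat.lt_or_ge n 2 with h | h
  · rw [Icc_eq_empty (by omega), Icc_eq_empty (by omega), sum_empty, sum_empty]
  · exact sum_congr (by rw [show n - 2 + 1 = n - 1 by omega]) fun k _ => by
      rw [show 2 + k - 1 = k + 1 by omega]

theorem tailSum_self : tailSum a v n n = 0 := by
  simp [tailSum]

theorem sum_Icc_one_eq_smul_add_tailSum (hn : 1 ≤ n) :
    ∑ k ∈ Icc 1 n, a k • v k = a 1 • v 1 + tailSum a v n 1 := by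
  rw [← insert_Icc_add_one_left_eq_Icc hn, sum_insert (by simp), tailSum,
    show n - 1 + 1 = n by omega]
  exact congrArg _ (sum_congr rfl fun k _ => by rw [Nat.add_sub_cancel_left])

theorem map_tailSum (f : V →ₗ[R] V) (hf : ∀ j, i < j → j ≤ n → f (v j) = v (j + 1))
    (hv0 : v (n + 1) = 0) : f (tailSum a v n i) = tailSum a v n (i + 1) := by
  unfold tailSum
  rw [map_sum, sum_Icc_eq_sum_Icc_of_eq_zero (show n - (i + 1) + 1 ≤ n - i + 1 by omega)
    fun k hk hk' => by rw [show i + 1 + k - 1 = n + 1 by omega, hv0, smul_zero]]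
  refine sum_congr rfl fun k hk => ?_
  simp only [mem_Icc] at hk
  rw [map_smul, hf _ (by omega) (by omega), show i + k - 1 + 1 = i + 1 + k - 1 by omega]

end TailSum

section Derivation

variable {K V : Type*} [Field K] [AddCommGroup V] [Module K V] {n : ℕ} {eN yN : ℕ → V}
  {br : V →ₗ[K] V →ₗ[K] V} {d : Module.End K V} {c : ℕ → K}

variable (br d) in
def IsDerivation : Prop := ∀ u v, d (br u v) = br (d u) v + br u (d v)

theorem d_eN_one_eq (hn : 1 ≤ n)
    (hyy1 : ∀ j, 1 ≤ j → j ≤ n → br (yN j) (yN 1) = if j = 1 then eN 1 else eN (j + 1))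
    (hyy0 : ∀ k, 2 ≤ k → k ≤ n → br (yN 1) (yN k) = 0) (heN0 : ∀ k, n < k → eN k = 0)
    (hd : IsDerivation br d)
    (hdy1 : d (yN 1) = c 1 • yN 1 + tailSum c yN n 1) :
    d (eN 1) = (2 * c 1) • eN 1 + tailSum c eN n 2 := by
  have hy11 : br (yN 1) (yN 1) = eN 1 := by simpa using hyy1 1 le_rfl hn
  have hleft : br (tailSum c yN n 1) (yN 1) = tailSum c eN n 2 := by
    rw [tailSum, LinearMap.map_sum₂, tailSum_eq_sum_Icc heN0 (show n - 2 + 1 ≤ n by omega),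
      show n - 1 + 1 = n by omega]
    refine sum_congr rfl fun k hk => ?_
    simp only [mem_Icc] at hk
    rw [LinearMap.map_smul₂, hyy1 _ (by omega) (by omega), if_neg (by omega),
      show 1 + k - 1 + 1 = 2 + k - 1 by omega]
  have hright : br (yN 1) (tailSum c yN n 1) = 0 := by
    rw [tailSum, map_sum]
    refine sum_eq_zero fun k hk => ?_
    simp only [mem_Icc] at hk
    rw [map_smul, hyy0 _ (by omega) (by omega), smul_zero]
  rw [← hy11, hd, hdy1]
  simp only [map_add, map_smul, LinearMap.add_apply, LinearMap.smul_apply, hy11, hleft, hright]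
  module

theorem d_br_eN_one_eq (hd : IsDerivation br d)
    (hde1 : d (eN 1) = (2 * c 1) • eN 1 + tailSum c eN n 2) {x T : V} {α : K}
    (hx : ∀ j, 3 ≤ j → j ≤ n → br x (eN j) = 0) (hdx : d x = α • x + T) :
    d (br x (eN 1)) = (α + 2 * c 1) • br x (eN 1) + br T (eN 1) := by
  have hxT : br x (tailSum c eN n 2) = 0 := by
    rw [tailSum, map_sum]
    refine sum_eq_zero fun k hk => ?_
    simp only [mem_Icc] at hk
    rw [map_smul, hx _ (by omega) (by omega), smul_zero]
  rw [hd, hdx, hde1]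
  simp only [map_add, map_smul, LinearMap.add_apply, LinearMap.smul_apply, hxT]
  module

theorem d_yN_eq (hye1 : ∀ j, 1 ≤ j → j ≤ n → br (yN j) (eN 1) = yN (j + 1))
    (hye0 : ∀ j i, 1 ≤ j → j ≤ n → 3 ≤ i → i ≤ n → br (yN j) (eN i) = 0)
    (hyN0 : yN (n + 1) = 0) (hd : IsDerivation br d)
    (hde1 : d (eN 1) = (2 * c 1) • eN 1 + tailSum c eN n 2)
    (hdy1 : d (yN 1) = c 1 • yN 1 + tailSum c yN n 1) :
    ∀ i, 1 ≤ i → i ≤ n → d (yN i) = ((2 * (i : K) - 1) * c 1) • yN i + tailSum c yN n i := by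
  intro i hi
  induction i, hi using Nat.le_induction with
  | base => intro; rw [hdy1]; norm_num
  | succ m hm ih =>
    intro hmn
    have hshift := map_tailSum (a := c) (i := m) (br.flip (eN 1))
      (fun j _ hj => hye1 j (by omega) hj) hyN0
    rw [LinearMap.flip_apply] at hshift
    rw [← hye1 m hm (by omega), d_br_eN_one_eq hd hde1 (hye0 m · hm (by omega)) (ih (by omega)),
      hshift]
    push_cast
    ring_nf

theorem d_eN_eq (hee11 : br (eN 1) (eN 1) = eN 3)
    (hee1 : ∀ j, 3 ≤ j → j ≤ n → br (eN j) (eN 1) = eN (j + 1))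
    (hee0 : ∀ i j, 1 ≤ i → i ≤ n → 3 ≤ j → j ≤ n → br (eN i) (eN j) = 0)
    (heN0 : eN (n + 1) = 0) (hd : IsDerivation br d)
    (hde1 : d (eN 1) = (2 * c 1) • eN 1 + tailSum c eN n 2) :
    ∀ i, 3 ≤ i → i ≤ n →
      d (eN i) = (2 * ((i : K) - 1) * c 1) • eN i + tailSum c eN n i := by
  have hshift (i : ℕ) (hi : 2 ≤ i) : br (tailSum c eN n i) (eN 1) = tailSum c eN n (i + 1) := by
    simpa using map_tailSum (br.flip (eN 1)) (fun j _ hj => hee1 j (by omega) hj) heN0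
  intro i hi
  induction i, hi using Nat.le_induction with
  | base =>
    intro hn
    rw [← hee11, d_br_eN_one_eq hd hde1 (hee0 1 · le_rfl (by omega)) hde1, hshift 2 le_rfl]
    push_cast
    ring_nf
  | succ m hm ih =>
    intro hmn
    rw [← hee1 m hm (by omega), d_br_eN_one_eq hd hde1 (hee0 m · (by omega) (by omega))
      (ih (by omega)), hshift m (by omega)]
    push_cast
    ring_nf

theorem d_eN_two_eq [NeZero (2 : K)] (hn : 2 ≤ n) {b : ℕ → K} {coord : ℕ → V →ₗ[K] K}
    (hcoord : ∀ m, 1 ≤ m → m ≤ n → ∀ k, coord m (yN k) = if k = m then 1 else 0)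
    (hey1 : ∀ i, 1 ≤ i → i ≤ n → br (eN i) (yN 1) =
      if i = 1 then (1 / 2 : K) • yN 2 else if i = 2 then 0 else (1 / 2 : K) • yN i)
    (he2y : ∀ k, 1 ≤ k → k ≤ n → br (eN 2) (yN k) = 0)
    (hd : IsDerivation br d)
    (hdy1 : d (yN 1) = ∑ k ∈ Icc 1 n, c k • yN k)
    (hde2 : d (eN 2) = ∑ k ∈ Icc 1 n, b k • eN k) :
    d (eN 2) = b 2 • eN 2 := by
  have hsplit : Icc 1 n = insert 1 (insert 2 (Icc 3 n)) := by
    ext k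
    simp only [mem_Icc, mem_insert]
    omega
  have hzero : br (d (eN 2)) (yN 1) = 0 := by
    have h := hd (eN 2) (yN 1)
    rw [he2y 1 le_rfl (by omega), map_zero, hdy1, map_sum,
      sum_eq_zero fun k hk => by
        simp only [mem_Icc] at hk
        rw [map_smul, he2y k hk.1 hk.2, smul_zero], add_zero] at h
    exact h.symm
  have hexpand : br (d (eN 2)) (yN 1) = (1 / 2 : K) • (b 1 • yN 2 + ∑ k ∈ Icc 3 n, b k • yN k) := by
    simp only [hde2, LinearMap.map_sum₂, LinearMap.map_smul₂]
    rw [hsplit, sum_insert (by simp), sum_insert (by simp),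
      hey1 1 le_rfl (by omega), hey1 2 (by omega) hn, smul_add, Finset.smul_sum]
    simp only [if_true, OfNat.ofNat_ne_one, if_false, smul_zero, zero_add]
    refine congrArg₂ _ (smul_comm _ _ _) (sum_congr rfl fun k hk => ?_)
    simp only [mem_Icc] at hk
    rw [hey1 k (by omega) hk.2, if_neg (by omega), if_neg (by omega), smul_comm]
  have hcoeff (m : ℕ) := congrArg (coord m) (hzero.symm.trans hexpand)
  have h20 : (0 : K) ≠ 2 := two_ne_zero.symm
  have hb1 : b 1 = 0 := by
    simpa [map_sum_smul_eq_ite (hcoord 2 (by omega) hn), hcoord 2 (by omega) hn, h20, eq_comm]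
      using hcoeff 2
  have hb (k : ℕ) (hk : k ∈ Icc 3 n) : b k = 0 := by
    simp only [mem_Icc] at hk
    simpa [map_sum_smul_eq_ite (hcoord k (by omega) hk.2), hcoord k (by omega) hk.2, hk.1,
      hk.2, show k ≠ 2 by omega, h20, eq_comm] using hcoeff k
  rw [hde2, hsplit, sum_insert (by simp), sum_insert (by simp), hb1, sum_eq_zero fun k hk => by
    rw [hb k hk, zero_smul], zero_smul, zero_add, add_zero]

theorem gamma_mul_eq_zero [NeZero (2 : K)] {γ b₂ : K} (hen : eN n ≠ 0)
    (hee2b : br (eN 2) (eN 2) = γ • eN n) (hd : IsDerivation br d)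
    (hde2 : d (eN 2) = b₂ • eN 2)
    (hden : d (eN n) = (2 * ((n : K) - 1) * c 1) • eN n + tailSum c eN n n) :
    γ * (((n : K) - 1) * c 1 - b₂) = 0 := by
  have h := hd (eN 2) (eN 2)
  rw [hde2, map_smul, map_smul, LinearMap.smul_apply, hee2b, map_smul, hden, tailSum_self,
    add_zero, smul_smul, smul_smul, ← add_smul] at h
  have h2 : (2 : K) * (γ * (((n : K) - 1) * c 1 - b₂)) = 0 := by
    linear_combination smul_left_injective K hen h
  exact (mul_eq_zero.mp h2).resolve_left two_ne_zero

theorem beta_mul_eq_zero {β : ℕ → K} {b₂ : K} {coord : ℕ → V →ₗ[K] K}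
    (hcoord : ∀ m, 1 ≤ m → m ≤ n → ∀ k, coord m (eN k) = if k = m then 1 else 0)
    (heN0 : ∀ k, n < k → eN k = 0)
    (hee2a : br (eN 1) (eN 2) = ∑ k ∈ Icc 4 n, β k • eN k)
    (hee2c : ∀ i, 3 ≤ i → i ≤ n → br (eN i) (eN 2) = ∑ k ∈ Icc 4 n, β k • eN (i + k - 2))
    (hd : IsDerivation br d)
    (hde1 : d (eN 1) = (2 * c 1) • eN 1 + tailSum c eN n 2) (hde2 : d (eN 2) = b₂ • eN 2)
    (hde : ∀ i, 3 ≤ i → i ≤ n →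
      d (eN i) = (2 * ((i : K) - 1) * c 1) • eN i + tailSum c eN n i) :
    ∀ i, 4 ≤ i → i ≤ n → β i * (2 * ((i : K) - 2) * c 1 - b₂) = 0 := by
  set cross := ∑ k ∈ Icc 4 n, β k • ∑ m ∈ Icc 2 (n - 1), c m • eN (k + m - 1)
  have hlhs : d (br (eN 1) (eN 2)) =
      ∑ k ∈ Icc 4 n, (β k * (2 * ((k : K) - 1) * c 1)) • eN k + cross := by
    rw [hee2a, map_sum, ← sum_add_distrib]
    refine sum_congr rfl fun k hk => ?_
    simp only [mem_Icc] at hk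
    rw [map_smul, hde k (by omega) hk.2, tailSum_eq_sum_Icc heN0 (N := n - 1) (by omega), smul_add,
      smul_smul]
  have hcross : br (tailSum c eN n 2) (eN 2) = cross := by
    rw [tailSum_two, LinearMap.map_sum₂]
    have hterm (m : ℕ) (hm : m ∈ Icc 2 (n - 1)) :
        br (c m • eN (m + 1)) (eN 2) = ∑ k ∈ Icc 4 n, β k • c m • eN (k + m - 1) := by
      simp only [mem_Icc] at hm
      rw [LinearMap.map_smul₂, hee2c (m + 1) (by omega) (by omega), smul_sum]
      refine sum_congr rfl fun k hk => ?_
      rw [smul_comm, show m + 1 + k - 2 = k + m - 1 by omega]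
    rw [sum_congr rfl hterm, sum_comm]
    simp only [cross, smul_sum]
  have hrhs : br (d (eN 1)) (eN 2) + br (eN 1) (d (eN 2)) =
      (2 * c 1 + b₂) • ∑ k ∈ Icc 4 n, β k • eN k + cross := by
    rw [hde1, hde2, map_add, map_smul, map_smul, LinearMap.add_apply, LinearMap.smul_apply, hee2a,
      hcross, add_smul]
    abel
  have h := add_right_cancel ((hlhs.symm.trans (hd _ _)).trans hrhs)
  intro i hi hin
  have := congrArg (coord i) h
  rw [map_smul, map_sum_smul_eq_ite (hcoord i (by omega) hin),
    map_sum_smul_eq_ite (hcoord i (by omega) hin)] at this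
  simp only [mem_Icc, hi, hin, and_self, if_true, smul_eq_mul] at this
  linear_combination this

theorem delta_mul_eq_zero (hn : 1 ≤ n) {β : ℕ → K} {δ b₂ : K} {coord : V →ₗ[K] K}
    (hcoord : ∀ k, coord (yN k) = if k = n then 1 else 0) (hyN0 : ∀ k, n < k → yN k = 0)
    (hye2a : br (yN 1) (eN 2) = (∑ k ∈ Icc 4 n, β k • yN (k - 1)) + δ • yN n)
    (hye2b : ∀ j, 2 ≤ j → j ≤ n → br (yN j) (eN 2) = ∑ k ∈ Icc 4 n, β k • yN (j + k - 2))
    (hd : IsDerivation br d) (hde2 : d (eN 2) = b₂ • eN 2)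
    (hdy : ∀ i, 1 ≤ i → i ≤ n →
      d (yN i) = ((2 * (i : K) - 1) * c 1) • yN i + tailSum c yN n i) :
    δ * (2 * ((n : K) - 1) * c 1 - b₂) = 0 := by
  set cross := ∑ k ∈ Icc 4 n, β k • ∑ m ∈ Icc 2 n, c m • yN (k - 1 + m - 1)
  have hlhs : d (br (yN 1) (eN 2)) =
      (∑ k ∈ Icc 4 n, (β k * ((2 * ((k - 1 : ℕ) : K) - 1) * c 1)) • yN (k - 1) +
        (δ * ((2 * (n : K) - 1) * c 1)) • yN n) + cross := by
    rw [hye2a, map_add, map_sum, map_smul, hdy n hn le_rfl, tailSum_self, add_zero, smul_smul]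
    have hterm (k : ℕ) (hk : k ∈ Icc 4 n) : d (β k • yN (k - 1)) =
        (β k * ((2 * ((k - 1 : ℕ) : K) - 1) * c 1)) • yN (k - 1) +
          β k • ∑ m ∈ Icc 2 n, c m • yN (k - 1 + m - 1) := by
      simp only [mem_Icc] at hk
      rw [map_smul, hdy (k - 1) (by omega) (by omega),
        tailSum_eq_sum_Icc hyN0 (N := n) (by omega), smul_add, smul_smul]
    rw [sum_congr rfl hterm, sum_add_distrib]
    abel
  have hcross : br (tailSum c yN n 1) (eN 2) = cross := by
    rw [tailSum_eq_sum_Icc hyN0 (N := n) (by omega), LinearMap.map_sum₂]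
    have hterm (m : ℕ) (hm : m ∈ Icc 2 n) :
        br (c m • yN (1 + m - 1)) (eN 2) = ∑ k ∈ Icc 4 n, β k • c m • yN (k - 1 + m - 1) := by
      simp only [mem_Icc] at hm
      rw [LinearMap.map_smul₂, hye2b (1 + m - 1) (by omega) (by omega), smul_sum]
      refine sum_congr rfl fun k hk => ?_
      simp only [mem_Icc] at hk
      rw [smul_comm, show 1 + m - 1 + k - 2 = k - 1 + m - 1 by omega]
    rw [sum_congr rfl hterm, sum_comm]
    simp only [cross, smul_sum]
  have hrhs : br (d (yN 1)) (eN 2) + br (yN 1) (d (eN 2)) =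
      (c 1 + b₂) • ((∑ k ∈ Icc 4 n, β k • yN (k - 1)) + δ • yN n) + cross := by
    rw [hdy 1 le_rfl hn, hde2, map_add, map_smul, map_smul, LinearMap.add_apply,
      LinearMap.smul_apply, hye2a, hcross]
    module
  have h := congrArg coord (add_right_cancel ((hlhs.symm.trans (hd _ _)).trans hrhs))
  have hsum (f : ℕ → K) : coord (∑ k ∈ Icc 4 n, f k • yN (k - 1)) = 0 := by
    rw [map_sum]
    refine sum_eq_zero fun k hk => ?_
    simp only [mem_Icc] at hk
    rw [map_smul, hcoord, if_neg (by omega), smul_zero]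
  rw [map_add, map_smul, map_smul, map_add, map_smul, hsum, hsum, hcoord, if_pos rfl] at h
  linear_combination h

end Derivation

/-- Description of the even derivations of the Leibniz superalgebra
H(β₄,…,β_n,δ,γ) with multiplication table (4) of the paper. -/
theorem statement9 {V : Type*} [AddCommGroup V] [Module ℂ V]
    (n : ℕ) (hn : 3 ≤ n) (β : ℕ → ℂ) (δ γ : ℂ)
    (bas : Module.Basis (Fin n ⊕ Fin n) ℂ V)
    (eN yN : ℕ → V)
    (heN : ∀ k (h : 1 ≤ k ∧ k ≤ n), eN k = bas (Sum.inl ⟨k - 1, by omega⟩))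
    (heN0 : ∀ k, ¬(1 ≤ k ∧ k ≤ n) → eN k = 0)
    (hyN : ∀ k (h : 1 ≤ k ∧ k ≤ n), yN k = bas (Sum.inr ⟨k - 1, by omega⟩))
    (hyN0 : ∀ k, ¬(1 ≤ k ∧ k ≤ n) → yN k = 0)
    (br : V →ₗ[ℂ] V →ₗ[ℂ] V)
    -- multiplication table (4):
    (hee1 : ∀ i, 1 ≤ i → i ≤ n →
      br (eN i) (eN 1) = if i = 1 then eN 3 else if i = 2 then 0 else eN (i + 1))
    (hee2a : br (eN 1) (eN 2) = ∑ k ∈ Finset.Icc 4 n, β k • eN k)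
    (hee2b : br (eN 2) (eN 2) = γ • eN n)
    (hee2c : ∀ i, 3 ≤ i → i ≤ n →
      br (eN i) (eN 2) = ∑ k ∈ Finset.Icc 4 n, β k • eN (i + k - 2))
    (hee0 : ∀ i j, 1 ≤ i → i ≤ n → 3 ≤ j → j ≤ n → br (eN i) (eN j) = 0)
    (hye1 : ∀ j, 1 ≤ j → j ≤ n → br (yN j) (eN 1) = yN (j + 1))
    (hye2a : br (yN 1) (eN 2) = (∑ k ∈ Finset.Icc 4 n, β k • yN (k - 1)) + δ • yN n)
    (hye2b : ∀ j, 2 ≤ j → j ≤ n →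
      br (yN j) (eN 2) = ∑ k ∈ Finset.Icc 4 n, β k • yN (j + k - 2))
    (hye0 : ∀ j i, 1 ≤ j → j ≤ n → 3 ≤ i → i ≤ n → br (yN j) (eN i) = 0)
    (hey1 : ∀ i, 1 ≤ i → i ≤ n → br (eN i) (yN 1) =
      if i = 1 then (1 / 2 : ℂ) • yN 2 else if i = 2 then 0 else (1 / 2 : ℂ) • yN i)
    (hey0 : ∀ i j, 1 ≤ i → i ≤ n → 2 ≤ j → j ≤ n → br (eN i) (yN j) = 0)
    (hyy1 : ∀ j, 1 ≤ j → j ≤ n →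
      br (yN j) (yN 1) = if j = 1 then eN 1 else eN (j + 1))
    (hyy0 : ∀ j k, 1 ≤ j → j ≤ n → 2 ≤ k → k ≤ n → br (yN j) (yN k) = 0)
    -- d is an even derivation:
    (d : Module.End ℂ V)
    (hdE : ∀ x ∈ Submodule.span ℂ (Set.range fun i : Fin n => bas (Sum.inl i)),
      d x ∈ Submodule.span ℂ (Set.range fun i : Fin n => bas (Sum.inl i)))
    (hdY : ∀ x ∈ Submodule.span ℂ (Set.range fun j : Fin n => bas (Sum.inr j)),
      d x ∈ Submodule.span ℂ (Set.range fun j : Fin n => bas (Sum.inr j)))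
    (hder : ∀ u v : V, d (br u v) = br (d u) v + br u (d v)) :
    ∃ (a : ℕ → ℂ) (b2 : ℂ),
      d (eN 1) = (2 * a 1) • eN 1 + ∑ k ∈ Finset.Icc 2 (n - 1), a k • eN (k + 1) ∧
      d (eN 2) = b2 • eN 2 ∧
      (∀ i, 3 ≤ i → i ≤ n → d (eN i) =
        (2 * ((i : ℂ) - 1) * a 1) • eN i +
          ∑ k ∈ Finset.Icc 2 (n - i + 1), a k • eN (i + k - 1)) ∧
      (∀ i, 1 ≤ i → i ≤ n → d (yN i) =
        ((2 * (i : ℂ) - 1) * a 1) • yN i +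
          ∑ k ∈ Finset.Icc 2 (n - i + 1), a k • yN (i + k - 1)) ∧
      (∀ i, 4 ≤ i → i ≤ n → β i * (2 * ((i : ℂ) - 2) * a 1 - b2) = 0) ∧
      δ * (2 * ((n : ℂ) - 1) * a 1 - b2) = 0 ∧
      γ * (((n : ℂ) - 1) * a 1 - b2) = 0 := by
  have hn1 : 1 ≤ n := by omega
  have heN0' : ∀ k, n < k → eN k = 0 := fun k hk => heN0 k (by omega)
  have hyN0' : ∀ k, n < k → yN k = 0 := fun k hk => hyN0 k (by omega)
  have heN' (j : Fin n) : eN (j + 1) = bas (Sum.inl j) := by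
    simpa using heN (j + 1) ⟨by omega, j.isLt⟩
  have hyN' (j : Fin n) : yN (j + 1) = bas (Sum.inr j) := by
    simpa using hyN (j + 1) ⟨by omega, j.isLt⟩
  have hcoordE (m : ℕ) (hm : 1 ≤ m) (hmn : m ≤ n) :=
    coordAt_apply Sum.inl_injective heN' heN0 ⟨hm, hmn⟩
  have hcoordY (m : ℕ) (hm : 1 ≤ m) (hmn : m ≤ n) :=
    coordAt_apply Sum.inr_injective hyN' hyN0 ⟨hm, hmn⟩
  obtain ⟨c, hdy1⟩ := exists_eq_sum_Icc_of_mem_span hyN' (hdY (yN 1) (by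
    rw [hyN 1 ⟨le_rfl, hn1⟩]; exact Submodule.subset_span ⟨⟨0, by omega⟩, rfl⟩))
  obtain ⟨b, hde2⟩ := exists_eq_sum_Icc_of_mem_span heN' (hdE (eN 2) (by
    rw [heN 2 ⟨by omega, by omega⟩]; exact Submodule.subset_span ⟨⟨1, by omega⟩, rfl⟩))
  have hdy1' := hdy1.trans (sum_Icc_one_eq_smul_add_tailSum hn1)
  have hde1 := d_eN_one_eq hn1 hyy1 (hyy0 1 · le_rfl hn1) heN0' hder hdy1'
  have hdy := d_yN_eq hye1 hye0 (hyN0' _ n.lt_succ_self) hder hde1 hdy1'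
  have hde := d_eN_eq (by simpa using hee1 1 le_rfl hn1)
    (fun j hj hjn => by
      simpa [show j ≠ 1 by omega, show j ≠ 2 by omega] using hee1 j (by omega) hjn)
    hee0 (heN0' _ n.lt_succ_self) hder hde1
  have he2y (k : ℕ) (hk : 1 ≤ k) (hkn : k ≤ n) : br (eN 2) (yN k) = 0 := by
    rcases hk.eq_or_lt with rfl | hk
    · simpa using hey1 2 (by omega) (by omega)
    · exact hey0 2 k (by omega) (by omega) hk hkn
  have hde2 := d_eN_two_eq (by omega) hcoordY hey1 he2y hder hdy1 hde2
  refine ⟨c, b 2, hde1.trans (by rw [tailSum_two]), hde2, hde, hdy,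
    beta_mul_eq_zero hcoordE heN0' hee2a hee2c hder hde1 hde2 hde,
    delta_mul_eq_zero hn1 (hcoordY n hn1 le_rfl) hyN0' hye2a hye2b hder hde2 hdy,
    gamma_mul_eq_zero (by rw [heN n ⟨hn1, le_rfl⟩]; exact bas.ne_zero _) hee2b hder hde2
      (hde n hn le_rfl)⟩
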